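/- Consider the exact sequences 0 → ker Â → ℂ^{N₁+1} → ℂ^{N₂+1} → 0 and 0 → ker A → ℂ^{N₁} → ℂ^{N₂} → 0, where Â extends A by: J₁(z₁,…,z_{N₁}) = (z₁,…,z_{N₁},−z₁) embeds ℂ^{N₁} into ℂ^{N₁+1}, the first N₂ rows of Â pull back to the rows of A via J₁, and the last row of Â is h(z₁,…,z_{N₁+1}) = z₁ + z_{N₁+1}. Let I : ker A → ker Â be the induced isomorphism. Then I*ν̂ = c₀·ν, where ν, ν̂ are the kernel volume forms induced by the Lebesgue measures, and c₀ is a constant independent of which coordinate is doubled (i.e., independent of the choice of the permutation variant of the construction). -/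

import Mathlib

open scoped TensorProduct

/-- The standard (Lebesgue) volume form `λ_{2N}` on `ℂ^N ≅ ℝ^{2N}`. -/
noncomputable def lebesgueForm (N : ℕ) :
    AlternatingMap ℝ (Fin N → ℂ) ℝ (Fin (2 * N)) :=
  ((Pi.basis fun _ : Fin N => Complex.basisOneI).reindex
      (((Equiv.sigmaEquivProd (Fin N) (Fin 2)).trans finProdFinEquiv).trans
        (finCongr (by omega)))).det

/-- The wedge product of two real-valued alternating forms. -/
noncomputable def wedge {E : Type*} [AddCommGroup E] [Module ℝ E] {p q : ℕ}
    (f : AlternatingMap ℝ E ℝ (Fin p)) (g : AlternatingMap ℝ E ℝ (Fin q)) :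
    AlternatingMap ℝ E ℝ (Fin (p + q)) :=
  ((TensorProduct.lid ℝ ℝ).toLinearMap.compAlternatingMap (f.domCoprod g)).domDomCongr
    finSumFinEquiv

/-- The embedding `J₁ : ℂ^{N} → ℂ^{N+1}`, `J₁(z₁,…,z_N) = (z₁,…,z_N,−z_k)`, which doubles
(with a sign) the `k`-th coordinate. -/
noncomputable def Jdup (N : ℕ) (k : Fin N) : (Fin N → ℂ) →ₗ[ℂ] (Fin (N + 1) → ℂ) :=
  LinearMap.pi fun i =>
    Fin.lastCases (-(LinearMap.proj k)) (fun j => LinearMap.proj j) i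

/-
The kernel forms are read off from the wedge identities: if `A w` is the standard real basis of
`ℂ^{N₂}` and `c` lies in `ker A`, only the trivial shuffle survives in `(η ∧ A*λ)(c, w)`, so
`η c = λ_{2N₁}(c, w)`. On the extended side use the lifts `J w` together with `u, i u`, where
`u = e_{N₁+1} - J y` and `A y` is the first block of `Â e_{N₁+1}`, so that `Â` maps them to the
standard basis of `ℂ^{N₂+1}`. The family `(J c, J w, u, i u)` is the image of the zero-padded
family `(c, w, e_{N₁+1}, i e_{N₁+1})` under a product of two complex transvections, which has
real determinant `1`, and padding by the last coordinate does not change the volume. Hence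
`I*ν̂ = ν`, i.e. `c₀ = 1`.
-/

open Module

section Wedge

variable {E F : Type*} [AddCommGroup E] [Module ℝ E] [AddCommGroup F] [Module ℝ F]

theorem wedge_compLinearMap_append {p q : ℕ} (f : E [⋀^Fin p]→ₗ[ℝ] ℝ)
    (g : F [⋀^Fin q]→ₗ[ℝ] ℝ) (A : E →ₗ[ℝ] F) {a : Fin p → E} (ha : ∀ i, A (a i) = 0)
    (b : Fin q → E) :
    wedge f (g.compLinearMap A) (Fin.append a b) = f a * g (A ∘ b) := by
  classical
  rw [wedge, AlternatingMap.domDomCongr_apply, LinearMap.compAlternatingMap_apply,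
    AlternatingMap.domCoprod_apply, sum_apply, map_sum]
  refine (Fintype.sum_eq_single (Quotient.mk'' 1) ?_).trans ?_
  · intro x hσ
    induction x using Quotient.inductionOn' with | h σ => ?_
    obtain ⟨j, i, hji⟩ : ∃ j i, σ (Sum.inr j) = Sum.inl i := by
      by_contra! h
      have hinr : Set.MapsTo σ (Set.range Sum.inr) (Set.range Sum.inr) := by
        rintro _ ⟨j, rfl⟩
        rcases hs : σ (Sum.inr j) with i | j'
        · exact absurd hs (h j i)
        · exact ⟨j', rfl⟩
      have hrange := Equiv.Perm.mem_sumCongrHom_range_of_perm_mapsTo_inl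
        ((Equiv.Perm.perm_mapsTo_inl_iff_mapsTo_inr σ).mpr hinr)
      exact hσ (Quotient.sound' (QuotientGroup.leftRel_apply.mpr (by simpa using hrange)))
    have hg : g.compLinearMap A (fun j' => Fin.append a b (finSumFinEquiv (σ (Sum.inr j')))) = 0 :=
      g.map_coord_zero j (by simp [hji, ha])
    simp only [AlternatingMap.domCoprod.summand_mk'', smul_apply,
      MultilinearMap.domDomCongr_apply, MultilinearMap.domCoprod_apply,
      AlternatingMap.coe_multilinearMap, Function.comp_apply, hg, TensorProduct.tmul_zero,
      smul_zero, map_zero]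
  · simp [AlternatingMap.domCoprod.summand_mk'', Function.comp_def]

theorem apply_eq_of_wedge_det_eq {n p q : ℕ} {η : E [⋀^Fin p]→ₗ[ℝ] ℝ}
    {μ : E [⋀^Fin n]→ₗ[ℝ] ℝ} {A : E →ₗ[ℝ] F} {b : Basis (Fin q) ℝ F} {e : Fin n ≃ Fin (p + q)}
    (h : wedge η (b.det.compLinearMap A) = μ.domDomCongr e) {c : Fin p → E}
    (hc : ∀ i, A (c i) = 0) {w : Fin q → E} (hw : A ∘ w = b) :
    η c = μ (Fin.append c w ∘ e) := by
  have := congrArg (· (Fin.append c w)) h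
  simpa [wedge_compLinearMap_append _ _ _ hc, hw, Basis.det_self] using this

end Wedge

lemma comp_finAppend {α β : Type*} {m n : ℕ} (f : α → β) (a : Fin m → α) (b : Fin n → α) :
    f ∘ Fin.append a b = Fin.append (f ∘ a) (f ∘ b) := by
  funext r
  refine Fin.addCases (fun i => ?_) (fun j => ?_) r <;> simp

section Coordinates

variable (N : ℕ)

noncomputable def snocLinearEquiv : ((Fin N → ℂ) × ℂ) ≃ₗ[ℂ] (Fin (N + 1) → ℂ) where
  toFun p := Fin.snoc p.1 p.2
  invFun z := (Fin.init z, z (Fin.last N))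
  map_add' x y := funext fun i => Fin.lastCases (by simp) (by simp) i
  map_smul' r x := funext fun i => Fin.lastCases (by simp) (by simp) i
  left_inv p := by simp
  right_inv z := Fin.snoc_init_self z

noncomputable def snocZero : (Fin N → ℂ) →ₗ[ℂ] (Fin (N + 1) → ℂ) :=
  (snocLinearEquiv N).toLinearMap ∘ₗ LinearMap.inl ℂ _ ℂ

noncomputable def eLast : Fin (N + 1) → ℂ := snocLinearEquiv N (0, 1)

variable {N}

lemma snocLinearEquiv_apply (p : (Fin N → ℂ) × ℂ) :
    snocLinearEquiv N p = Fin.snoc (α := fun _ => ℂ) p.1 p.2 := rfl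

@[simp] lemma snocZero_castSucc (y : Fin N → ℂ) (j : Fin N) : snocZero N y j.castSucc = y j := by
  simp [snocZero, snocLinearEquiv_apply]

@[simp] lemma snocZero_last (y : Fin N → ℂ) : snocZero N y (Fin.last N) = 0 := by
  simp [snocZero, snocLinearEquiv_apply]

@[simp] lemma eLast_castSucc (j : Fin N) : eLast N j.castSucc = 0 := by
  simp [eLast, snocLinearEquiv_apply]

@[simp] lemma eLast_last : eLast N (Fin.last N) = 1 := by simp [eLast, snocLinearEquiv_apply]

@[simp] lemma Jdup_castSucc (k : Fin N) (z : Fin N → ℂ) (j : Fin N) :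
    Jdup N k z j.castSucc = z j := by
  simp [Jdup, LinearMap.pi_apply]

@[simp] lemma Jdup_last (k : Fin N) (z : Fin N → ℂ) : Jdup N k z (Fin.last N) = -z k := by
  simp [Jdup, LinearMap.pi_apply]

lemma snocZero_single (j : Fin N) (v : ℂ) :
    snocZero N (Pi.single j v) = Pi.single j.castSucc v := by
  funext i
  induction i using Fin.lastCases with
  | last => simp [(Fin.castSucc_lt_last j).ne']
  | cast i => simp [Pi.single_apply]

lemma eLast_eq_single : eLast N = Pi.single (Fin.last N) 1 := by
  funext i
  induction i using Fin.lastCases <;> simp [(Fin.castSucc_lt_last _).ne]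

lemma smul_eLast (t : ℂ) : t • eLast N = snocLinearEquiv N (0, t) := by
  rw [eLast, ← map_smul, Prod.smul_mk, smul_zero, smul_eq_mul, mul_one]

lemma eq_snocZero_add_smul_eLast (z : Fin (N + 1) → ℂ) :
    z = snocZero N (Fin.init z) + z (Fin.last N) • eLast N := by
  funext i
  induction i using Fin.lastCases <;> simp [Fin.init]

noncomputable def shear (k : Fin N) (y : Fin N → ℂ) :
    (Fin (N + 1) → ℂ) →ₗ[ℂ] (Fin (N + 1) → ℂ) :=
  LinearMap.transvection (-LinearMap.proj k.castSucc) (eLast N) ∘ₗ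
    LinearMap.transvection (-LinearMap.proj (Fin.last N)) (snocZero N y)

lemma shear_snocZero (k : Fin N) (y z : Fin N → ℂ) : shear k y (snocZero N z) = Jdup N k z := by
  funext i
  induction i using Fin.lastCases <;> simp [shear, LinearMap.transvection.apply]

lemma shear_eLast (k : Fin N) (y : Fin N → ℂ) :
    shear k y (eLast N) = eLast N - Jdup N k y := by
  funext i
  induction i using Fin.lastCases <;> simp [shear, LinearMap.transvection.apply]

lemma det_restrictScalars_shear (k : Fin N) (y : Fin N → ℂ) :
    ((shear k y).restrictScalars ℝ).det = 1 := by
  simp [LinearMap.det_restrictScalars, shear, LinearMap.det_comp]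

noncomputable def extendFamily {m : ℕ} (x : Fin m → Fin N → ℂ) : Fin (m + 2) → Fin (N + 1) → ℂ :=
  Fin.append (snocZero N ∘ x) ![eLast N, Complex.I • eLast N]

lemma extendFamily_map {M m : ℕ} (L : (Fin (N + 1) → ℂ) →ₗ[ℝ] (Fin (M + 1) → ℂ))
    (L' : (Fin N → ℂ) → (Fin M → ℂ)) (hL : ∀ y, L (snocZero N y) = snocZero M (L' y))
    (hre : L (eLast N) = eLast M) (him : L (Complex.I • eLast N) = Complex.I • eLast M)
    (x : Fin m → Fin N → ℂ) :
    L ∘ extendFamily x = extendFamily (L' ∘ x) := by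
  funext r
  refine Fin.addCases (fun i => ?_) (fun j => ?_) r
  · simp [extendFamily, hL]
  · fin_cases j <;> simp [extendFamily, hre, him]

lemma extendFamily_append {m n : ℕ} (c : Fin m → Fin N → ℂ) (w : Fin n → Fin N → ℂ) :
    extendFamily (Fin.append c w) =
      Fin.append (snocZero N ∘ c) (extendFamily w) ∘ Fin.cast (Nat.add_assoc m n 2) := by
  rw [extendFamily, extendFamily, comp_finAppend, Fin.append_assoc]

lemma extendFamily_comp_cast {m m' : ℕ} (h : m = m') (x : Fin m' → Fin N → ℂ) :
    extendFamily (x ∘ Fin.cast h) = extendFamily x ∘ Fin.cast (by omega) := by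
  subst h
  rfl

end Coordinates

noncomputable def lebesgueBasis (N : ℕ) : Basis (Fin (2 * N)) ℝ (Fin N → ℂ) :=
  (Pi.basis fun _ : Fin N => Complex.basisOneI).reindex
    (((Equiv.sigmaEquivProd (Fin N) (Fin 2)).trans finProdFinEquiv).trans (finCongr (by omega)))

lemma lebesgueForm_eq_det (N : ℕ) : lebesgueForm N = (lebesgueBasis N).det := rfl

lemma lebesgueBasis_apply (N : ℕ) (r : Fin (2 * N)) :
    lebesgueBasis N r =
      Pi.single (⟨r / 2, by omega⟩ : Fin N) (Complex.basisOneI ⟨r % 2, by omega⟩) := by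
  rw [lebesgueBasis, Basis.reindex_apply, Pi.basis_apply]
  rfl

lemma lebesgueBasis_succ (N : ℕ) :
    ⇑(lebesgueBasis (N + 1)) = extendFamily (lebesgueBasis N) := by
  funext r
  refine Fin.addCases (fun i => ?_) (fun j => ?_) r
  · simp only [extendFamily, Fin.append_left, Function.comp_apply, lebesgueBasis_apply,
      snocZero_single]
    rfl
  · fin_cases j
    · simp [extendFamily, lebesgueBasis_apply, eLast_eq_single]
      rfl
    · have h : (⟨(2 * N + 1) / 2, by omega⟩ : Fin (N + 1)) = Fin.last N :=
        Fin.ext (by simp; omega)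
      simp [extendFamily, lebesgueBasis_apply, eLast_eq_single, h, ← Pi.single_smul]

lemma lebesgueForm_succ_extendFamily (N : ℕ) (x : Fin (2 * N) → Fin N → ℂ) :
    lebesgueForm (N + 1) (extendFamily x) = lebesgueForm N x := by
  set M := (lebesgueBasis N).constr ℝ x
  set e := (snocLinearEquiv N).restrictScalars ℝ
  set L := e.toLinearMap ∘ₗ M.prodMap LinearMap.id ∘ₗ e.symm.toLinearMap
  have hL : ∀ p, L (snocLinearEquiv N p) = snocLinearEquiv N (M p.1, p.2) := fun p => by
    simp only [L, LinearMap.comp_apply]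
    exact congrArg e (by simp [e])
  have hx : x = M ∘ lebesgueBasis N := funext fun r => ((lebesgueBasis N).constr_basis ℝ x r).symm
  have hLx : L ∘ lebesgueBasis (N + 1) = extendFamily x := by
    rw [lebesgueBasis_succ, extendFamily_map L M, ← hx]
    · exact fun y => hL (y, 0)
    · rw [eLast]
      simpa only [map_zero] using hL (0, 1)
    · rw [smul_eLast]
      simpa only [map_zero] using hL (0, Complex.I)
  rw [lebesgueForm_eq_det, lebesgueForm_eq_det, ← hLx, Basis.det_comp, Basis.det_self,
    LinearMap.det_conj, LinearMap.det_prodMap, LinearMap.det_id, hx, Basis.det_comp,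
    Basis.det_self, mul_one]

lemma lebesgueForm_append_Jdup_shear {N m n : ℕ} (k : Fin N) (y : Fin N → ℂ)
    (c : Fin m → Fin N → ℂ) (w : Fin n → Fin N → ℂ) (h : 2 * N = m + n)
    (h' : 2 * (N + 1) = m + (n + 2)) :
    lebesgueForm (N + 1) (Fin.append (Jdup N k ∘ c) (shear k y ∘ extendFamily w) ∘ Fin.cast h') =
      lebesgueForm N (Fin.append c w ∘ Fin.cast h) := by
  have hJ : Jdup N k ∘ c = shear k y ∘ (snocZero N ∘ c) :=
    funext fun i => (shear_snocZero k y (c i)).symm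
  rw [← lebesgueForm_succ_extendFamily N, extendFamily_comp_cast, extendFamily_append, hJ,
    ← comp_finAppend, Function.comp_assoc, lebesgueForm_eq_det]
  change (lebesgueBasis (N + 1)).det ((shear k y).restrictScalars ℝ ∘ _) = _
  rw [Basis.det_comp, det_restrictScalars_shear, one_mul]
  rfl

section Extension

variable {N₁ N₂ : ℕ} {k : Fin N₁} {A : (Fin N₁ → ℂ) →ₗ[ℂ] (Fin N₂ → ℂ)}
  {Ahat : (Fin (N₁ + 1) → ℂ) →ₗ[ℂ] (Fin (N₂ + 1) → ℂ)}

lemma apply_Jdup_of_rows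
    (hrows : ∀ (z : Fin N₁ → ℂ) (i : Fin N₂), Ahat (Jdup N₁ k z) i.castSucc = A z i)
    (hlast : ∀ w : Fin (N₁ + 1) → ℂ, Ahat w (Fin.last N₂) = w k.castSucc + w (Fin.last N₁))
    (z : Fin N₁ → ℂ) : Ahat (Jdup N₁ k z) = snocZero N₂ (A z) := by
  funext i
  induction i using Fin.lastCases <;> simp [hrows, hlast]

lemma apply_shear_eLast_of_rows
    (hrows : ∀ (z : Fin N₁ → ℂ) (i : Fin N₂), Ahat (Jdup N₁ k z) i.castSucc = A z i)
    (hlast : ∀ w : Fin (N₁ + 1) → ℂ, Ahat w (Fin.last N₂) = w k.castSucc + w (Fin.last N₁))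
    {y : Fin N₁ → ℂ} (hy : A y = Fin.init (Ahat (eLast N₁))) :
    Ahat (shear k y (eLast N₁)) = eLast N₂ := by
  rw [shear_eLast, map_sub, apply_Jdup_of_rows hrows hlast, hy, sub_eq_iff_eq_add']
  simpa [hlast] using eq_snocZero_add_smul_eLast (Ahat (eLast N₁))

lemma comp_shear_extendFamily_of_rows
    (hrows : ∀ (z : Fin N₁ → ℂ) (i : Fin N₂), Ahat (Jdup N₁ k z) i.castSucc = A z i)
    (hlast : ∀ w : Fin (N₁ + 1) → ℂ, Ahat w (Fin.last N₂) = w k.castSucc + w (Fin.last N₁))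
    {y : Fin N₁ → ℂ} (hy : A y = Fin.init (Ahat (eLast N₁))) {m : ℕ} (w : Fin m → Fin N₁ → ℂ) :
    Ahat ∘ (shear k y ∘ extendFamily w) = extendFamily (A ∘ w) := by
  refine extendFamily_map ((Ahat ∘ₗ shear k y).restrictScalars ℝ) A (fun z => ?_) ?_ ?_ w
  · simp [shear_snocZero, apply_Jdup_of_rows hrows hlast]
  · exact apply_shear_eLast_of_rows hrows hlast hy
  · change Ahat (shear k y (Complex.I • eLast N₁)) = Complex.I • eLast N₂
    rw [map_smul, map_smul, apply_shear_eLast_of_rows hrows hlast hy]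

end Extension

/-- The increased exact sequence.  Let `A : ℂ^{N₁} → ℂ^{N₂}` be surjective, and let
`Â : ℂ^{N₁+1} → ℂ^{N₂+1}` extend `A` in the following sense: the first `N₂` rows of `Â`
pull back via `J₁` to the rows of `A`, and the last row of `Â` is
`h(z₁,…,z_{N₁+1}) = z_k + z_{N₁+1}`.  Let `I : ker A → ker Â` be the induced isomorphism
(the restriction of `J₁`).  Then `I* ν̂ = c₀ · ν`, where `ν`, `ν̂` are the kernel volume
forms induced by the Lebesgue measures via the exact sequences (i.e. `ν = ι*η` for any
`η` with `η ∧ A*λ_{2N₂} = λ_{2N₁}`, and similarly for `ν̂`), and `c₀` is a constant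
depending only on `N₁`, `N₂` — in particular independent of which coordinate `k` is
doubled. -/
theorem increased_exact_sequence_volume (N₁ N₂ : ℕ) (hN : N₂ ≤ N₁) :
    ∃ c₀ : ℝ,
      ∀ (k : Fin N₁)
        (A : (Fin N₁ → ℂ) →ₗ[ℂ] (Fin N₂ → ℂ)) (_ : Function.Surjective A)
        (Ahat : (Fin (N₁ + 1) → ℂ) →ₗ[ℂ] (Fin (N₂ + 1) → ℂ))
        (_ : Function.Surjective Ahat)
        (_ : ∀ (z : Fin N₁ → ℂ) (i : Fin N₂), Ahat (Jdup N₁ k z) i.castSucc = A z i)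
        (_ : ∀ w : Fin (N₁ + 1) → ℂ,
          Ahat w (Fin.last N₂) = w k.castSucc + w (Fin.last N₁))
        (I : (LinearMap.ker A) →ₗ[ℂ] (LinearMap.ker Ahat))
        (_ : ∀ x : LinearMap.ker A,
          (I x : Fin (N₁ + 1) → ℂ) = Jdup N₁ k (x : Fin N₁ → ℂ))
        (_ : Function.Bijective I)
        (η : AlternatingMap ℝ (Fin N₁ → ℂ) ℝ (Fin (2 * N₁ - 2 * N₂)))
        (ηhat : AlternatingMap ℝ (Fin (N₁ + 1) → ℂ) ℝ (Fin (2 * N₁ - 2 * N₂)))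
        (_ : wedge η ((lebesgueForm N₂).compLinearMap (A.restrictScalars ℝ))
          = (lebesgueForm N₁).domDomCongr (finCongr (by omega)))
        (_ : wedge ηhat ((lebesgueForm (N₂ + 1)).compLinearMap (Ahat.restrictScalars ℝ))
          = (lebesgueForm (N₁ + 1)).domDomCongr (finCongr (by omega))),
        (ηhat.compLinearMap
            (LinearMap.restrictScalars ℝ (Submodule.subtype (LinearMap.ker Ahat)))).compLinearMap
          (LinearMap.restrictScalars ℝ I)
          = c₀ • η.compLinearMap
              (LinearMap.restrictScalars ℝ (Submodule.subtype (LinearMap.ker A))) := by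
  refine ⟨1, fun k A hA Ahat _ hrows hlast I hI _ η ηhat hη hηhat => ?_⟩
  choose s hs using hA
  set w := s ∘ lebesgueBasis N₂
  set y := s (Fin.init (Ahat (eLast N₁)))
  have hw : A ∘ w = lebesgueBasis N₂ := funext fun j => hs _
  have hŵ : Ahat ∘ (shear k y ∘ extendFamily w) = lebesgueBasis (N₂ + 1) := by
    rw [comp_shear_extendFamily_of_rows hrows hlast (hs _), hw, lebesgueBasis_succ]
  rw [one_smul]
  ext x
  have hx : ∀ i, A (x i) = 0 := fun i => (x i).2
  have hJx : ∀ i, Ahat (Jdup N₁ k (x i)) = 0 := fun i => by rw [← hI]; exact (I (x i)).2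
  show ηhat (fun i => (I (x i) : Fin (N₁ + 1) → ℂ)) = η (fun i => (x i : Fin N₁ → ℂ))
  simp only [hI]
  rw [apply_eq_of_wedge_det_eq hη hx hw, apply_eq_of_wedge_det_eq hηhat hJx hŵ]
  exact lebesgueForm_append_Jdup_shear k y (fun i => (x i : Fin N₁ → ℂ)) w (by omega) (by omega)
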